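/- arXiv:0710.1482 — 3 statements merged into one kernel-verified Lean document; each statement's English description precedes it below -/
import Mathlib

section
/- Single-iteration ε-bypass lemma (Lemma: no new information): let N : NFA Σ σ and let E ⊆ σ × σ be a set of pairs such that for every (q', q'') ∈ E there exist a state q and an unbarred letter a ∈ {𝟎, 𝟏} with q ∈ N.step q' (bar a) and q'' ∈ N.step q a. Let M : εNFA Σ σ agree with N on all letter transitions (M.step s (some a) = N.step s a), have ε-transitions M.step s none = { t | (s,t) ∈ E }, and have the same start and accept sets as N. Then for every word α accepted by M there exists a word α' accepted by N with Red* α' α. -/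
/-- The four-letter alphabet Σ = {𝟎, 𝟏, 𝟎̄, 𝟏̄}. -/
inductive Sig : Type where
  | c0 : Sig  -- 𝟎
  | c1 : Sig  -- 𝟏
  | b0 : Sig  -- 𝟎̄
  | b1 : Sig  -- 𝟏̄
  deriving DecidableEq

open Sig

/-- A letter is unbarred if it is 𝟎 or 𝟏. -/
def Unbarred : Sig → Prop
  | c0 => True
  | c1 => True
  | b0 => False
  | b1 => False

/-- A letter is barred if it is 𝟎̄ or 𝟏̄. -/
def Barred : Sig → Prop
  | c0 => False
  | c1 => False
  | b0 => True
  | b1 => True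

/-- One-step reduction: delete an adjacent factor 𝟎̄𝟎 or 𝟏̄𝟏. -/
def Red (w w' : List Sig) : Prop :=
  ∃ u v : List Sig, (w = u ++ [b0, c0] ++ v ∨ w = u ++ [b1, c1] ++ v) ∧ w' = u ++ v

/-- Barring an unbarred letter: bar(𝟎)=𝟎̄, bar(𝟏)=𝟏̄ (identity on barred letters). -/
def bar : Sig → Sig
  | c0 => b0
  | c1 => b1
  | b0 => b0
  | b1 => b1


/-!
An ε-edge `(q', q'')` of `E` is simulated in `N` by the two letters `bar a, a`, which one reduction
step deletes again. Hence the set of states `N` reaches along some word reducing to `α` contains the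
start states, is closed under the ε-edges, and is carried by the `a`-transitions into the
corresponding set for `α ++ [a]`; by induction on `α` it contains every state of `M.eval α`.
-/

open Relation

theorem Red.append_right {w w' : List Sig} (h : Red w w') (x : List Sig) :
    Red (w ++ x) (w' ++ x) := by
  obtain ⟨u, v, hw, rfl⟩ := h
  exact ⟨u, v ++ x, by rcases hw with rfl | rfl <;> simp, by simp⟩

theorem reflTransGen_red_append_right {w w' : List Sig} (h : ReflTransGen Red w w')
    (x : List Sig) : ReflTransGen Red (w ++ x) (w' ++ x) := by
  induction h with
  | refl => exact .refl
  | tail _ hstep ih => exact ih.tail (hstep.append_right x)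

theorem red_append_bar_self {a : Sig} (ha : a ∈ ({c0, c1} : Set Sig)) (w : List Sig) :
    Red (w ++ [bar a, a]) w :=
  ⟨w, [], by rcases ha with rfl | rfl <;> simp [bar], by simp⟩

theorem εNFA.εClosure_subset_of_forall {α σ : Type*} (M : εNFA α σ) {S T : Set σ}
    (hST : S ⊆ T) (hT : ∀ s ∈ T, M.step s none ⊆ T) : M.εClosure S ⊆ T := by
  intro t ht
  induction ht with
  | base s hs => exact hST hs
  | step s t hst _ ih => exact hT s ih hst

def NFA.evalFromUpToRed {σ : Type*} (N : NFA Sig σ) (S : Set σ) (α : List Sig) : Set σ :=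
  {t | ∃ α', t ∈ N.evalFrom S α' ∧ ReflTransGen Red α' α}

namespace NFA

variable {σ : Type*} (N : NFA Sig σ)

theorem subset_evalFromUpToRed_nil (S : Set σ) : S ⊆ N.evalFromUpToRed S [] :=
  fun _ hs => ⟨[], hs, .refl⟩

theorem step_subset_evalFromUpToRed_append_singleton {S : Set σ} {α : List Sig} {t : σ}
    (ht : t ∈ N.evalFromUpToRed S α) (a : Sig) :
    N.step t a ⊆ N.evalFromUpToRed S (α ++ [a]) := by
  obtain ⟨α', hα', hred⟩ := ht
  intro u hu
  refine ⟨α' ++ [a], ?_, reflTransGen_red_append_right hred [a]⟩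
  rw [evalFrom_append, evalFrom_singleton, mem_stepSet]
  exact ⟨t, hα', hu⟩

theorem step_bar_step_subset_evalFromUpToRed {S : Set σ} {α : List Sig} {t q : σ}
    {a : Sig} (ha : a ∈ ({c0, c1} : Set Sig)) (ht : t ∈ N.evalFromUpToRed S α)
    (hq : q ∈ N.step t (bar a)) : N.step q a ⊆ N.evalFromUpToRed S α := by
  obtain ⟨α', hα', hred⟩ := ht
  intro u hu
  refine ⟨α' ++ [bar a, a], ?_, .head (red_append_bar_self ha α') hred⟩
  rw [evalFrom_append, mem_evalFrom_iff_exists]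
  refine ⟨t, hα', ?_⟩
  simp only [evalFrom_cons, evalFrom_nil, stepSet_singleton, mem_stepSet]
  exact ⟨q, hq, hu⟩

end NFA

section Bypass

variable {σ : Type*} {N : NFA Sig σ} {E : Set (σ × σ)} {M : εNFA Sig σ}

theorem εClosure_subset_evalFromUpToRed
    (hE : ∀ p ∈ E, ∃ (q : σ) (a : Sig), a ∈ ({c0, c1} : Set Sig) ∧
      q ∈ N.step p.1 (bar a) ∧ p.2 ∈ N.step q a)
    (heps : ∀ s, M.step s none = { t | (s, t) ∈ E })
    {S T : Set σ} {α : List Sig} (hT : T ⊆ N.evalFromUpToRed S α) :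
    M.εClosure T ⊆ N.evalFromUpToRed S α := by
  refine M.εClosure_subset_of_forall hT fun _ hs u hu => ?_
  rw [heps] at hu
  obtain ⟨q, a, ha, hq, hu⟩ := hE _ hu
  exact N.step_bar_step_subset_evalFromUpToRed ha hs hq hu

theorem evalFrom_subset_evalFromUpToRed
    (hE : ∀ p ∈ E, ∃ (q : σ) (a : Sig), a ∈ ({c0, c1} : Set Sig) ∧
      q ∈ N.step p.1 (bar a) ∧ p.2 ∈ N.step q a)
    (hstep : ∀ s a, M.step s (some a) = N.step s a)
    (heps : ∀ s, M.step s none = { t | (s, t) ∈ E })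
    (S : Set σ) (α : List Sig) : M.evalFrom S α ⊆ N.evalFromUpToRed S α := by
  induction α using List.reverseRecOn with
  | nil => exact εClosure_subset_evalFromUpToRed hE heps (N.subset_evalFromUpToRed_nil S)
  | append_singleton α a ih =>
    rw [εNFA.evalFrom_append_singleton]
    intro u hu
    obtain ⟨t, ht, hu⟩ := εNFA.mem_stepSet_iff.mp hu
    rw [hstep] at hu
    exact εClosure_subset_evalFromUpToRed hE heps
      (N.step_subset_evalFromUpToRed_append_singleton (ih ht) a) hu

end Bypass

/-- Single-iteration ε-bypass lemma (no new information): any word accepted after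
adding the bypass ε-edges is a reduced version of a word accepted before. -/
theorem stmt4 {σ : Type*} (N : NFA Sig σ) (E : Set (σ × σ))
    (hE : ∀ p ∈ E, ∃ (q : σ) (a : Sig), a ∈ ({c0, c1} : Set Sig) ∧
      q ∈ N.step p.1 (bar a) ∧ p.2 ∈ N.step q a)
    (M : εNFA Sig σ)
    (hstep : ∀ s a, M.step s (some a) = N.step s a)
    (heps : ∀ s, M.step s none = { t | (s, t) ∈ E })
    (hstart : M.start = N.start) (haccept : M.accept = N.accept) :
    ∀ α ∈ M.accepts, ∃ α' ∈ N.accepts, Relation.ReflTransGen Red α' α := by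
  rintro α ⟨t, ht, hα⟩
  have hN : t ∈ N.evalFromUpToRed N.start α :=
    hstart ▸ evalFrom_subset_evalFromUpToRed hE hstep heps M.start α hα
  obtain ⟨α', hα', hred⟩ := hN
  exact ⟨α', ⟨t, haccept ▸ ht, hα'⟩, hred⟩
end

section
/- Closure lemma: let N : NFA Σ σ be an automaton whose language is a fixed point of bypass saturation, i.e., the language accepted by sat N equals the language accepted by N. Then the language of N is closed under reduction: if α is accepted by N and Red* α α', then α' is accepted by N. -/
open Sig

/-- Bypass saturation: add an ε-edge bypassing every pair of consecutive edges
labeled 𝟎̄𝟎 or 𝟏̄𝟏; keep all letter transitions, start and accept sets. -/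
def sat {σ : Type*} (N : NFA Sig σ) : εNFA Sig σ where
  step s := fun o => match o with
    | some a => N.step s a
    | none => { q'' | ∃ q, ∃ a ∈ ({c0, c1} : Set Sig), q ∈ N.step s (bar a) ∧ q'' ∈ N.step q a }
  start := N.start
  accept := N.accept

theorem List.reduceOption_map_some {α : Type*} (l : List α) : (l.map some).reduceOption = l := by
  simp [List.reduceOption, List.filterMap_map]

theorem NFA.mem_evalFrom_singleton_append {α σ : Type*} (M : NFA α σ) {s t : σ}
    {x y : List α} :
    t ∈ M.evalFrom {s} (x ++ y) ↔ ∃ r ∈ M.evalFrom {s} x, t ∈ M.evalFrom {r} y := by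
  rw [NFA.evalFrom_append, NFA.mem_evalFrom_iff_exists]

theorem εNFA.isPath_map_some_of_mem_evalFrom {α σ : Type*} {N : NFA α σ} {M : εNFA α σ}
    (hstep : ∀ s a, N.step s a ⊆ M.step s (some a)) {s t : σ} {x : List α}
    (h : t ∈ N.evalFrom {s} x) : M.IsPath s t (x.map some) := by
  induction x generalizing s with
  | nil => simpa [eq_comm] using h
  | cons a x ih =>
    rw [NFA.evalFrom_cons, NFA.stepSet_singleton, NFA.mem_evalFrom_iff_exists] at h
    obtain ⟨r, hr, ht⟩ := h
    exact .cons r s t (some a) _ (hstep s a hr) (ih ht)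

/-- An accepting run of `N` on `u ++ [bar a, a] ++ v` becomes one of `sat N` on `u ++ v` by
replacing its two middle edges with the ε-edge that bypasses them. -/
theorem mem_sat_accepts_of_bypass {σ : Type*} (N : NFA Sig σ) {u v : List Sig} {a : Sig}
    (ha : a ∈ ({c0, c1} : Set Sig)) (hacc : u ++ [bar a, a] ++ v ∈ N.accepts) :
    u ++ v ∈ (sat N).accepts := by
  obtain ⟨f, hf, hrun⟩ := hacc
  obtain ⟨s₀, hs₀, hrun⟩ := N.mem_evalFrom_iff_exists.mp hrun
  simp only [N.mem_evalFrom_singleton_append, NFA.evalFrom_cons, NFA.stepSet_singleton,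
    NFA.evalFrom_nil, NFA.mem_stepSet] at hrun
  obtain ⟨r, ⟨s, hs, q, hq, hr⟩, hf'⟩ := hrun
  have hlift {s t : σ} {x : List Sig} (h : t ∈ N.evalFrom {s} x) :
      (sat N).IsPath s t (x.map some) :=
    εNFA.isPath_map_some_of_mem_evalFrom (fun _ _ => subset_rfl) h
  have hbypass : r ∈ (sat N).step s none := ⟨q, a, ha, hq, hr⟩
  have hword : (u.map some ++ none :: v.map some).reduceOption = u ++ v := by
    simp [List.reduceOption_append, List.reduceOption_map_some]
  refine (sat N).mem_accepts_iff_exists_path.mpr ⟨s₀, f, _, hs₀, hf, hword, ?_⟩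
  exact (sat N).isPath_append.mpr ⟨s, hlift hs, .cons r s f none _ hbypass (hlift hf')⟩

theorem mem_accepts_of_red {σ : Type*} (N : NFA Sig σ) (h : (sat N).accepts = N.accepts)
    {w w' : List Sig} (hred : Red w w') (hw : w ∈ N.accepts) : w' ∈ N.accepts := by
  obtain ⟨u, v, rfl | rfl, rfl⟩ := hred
  · exact h ▸ mem_sat_accepts_of_bypass N (a := c0) (by simp) hw
  · exact h ▸ mem_sat_accepts_of_bypass N (a := c1) (by simp) hw

/-- Closure lemma: if the language of N is a fixed point of bypass saturation,
then it is closed under reduction. -/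
theorem stmt6 {σ : Type*} (N : NFA Sig σ)
    (h : (sat N).accepts = N.accepts) :
    ∀ α ∈ N.accepts, ∀ α', Relation.ReflTransGen Red α α' → α' ∈ N.accepts := by
  intro α hα α' hred
  induction hred with
  | refl => exact hα
  | tail _ hstep ih => exact mem_accepts_of_red N h hstep ih
end

section
/- Equivalence theorem, part 2: let N_m : NFA Σ σ and let L₀ be a language over Σ such that every word α accepted by N_m has a word α' ∈ L₀ with Red* α' α. Let N = N_m↾ be the restriction of N_m to unbarred transitions. Then for every word β accepted by N there exists α ∈ L₀ with Red* α β. -/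
open Sig

/-- Restriction of an NFA to unbarred transitions: delete all edges labeled 𝟎̄ or 𝟏̄. -/
def restrict {σ : Type*} (N : NFA Sig σ) : NFA Sig σ where
  step s := fun a => match a with
    | c0 => N.step s c0
    | c1 => N.step s c1
    | b0 => ∅
    | b1 => ∅
  start := N.start
  accept := N.accept

namespace NFA

variable {α σ : Type*} {M M' : NFA α σ}

theorem stepSet_mono (hstep : ∀ s a, M.step s a ⊆ M'.step s a) {S S' : Set σ} (hS : S ⊆ S')
    (a : α) : M.stepSet S a ⊆ M'.stepSet S' a := by
  intro t ht
  obtain ⟨s, hs, hts⟩ := mem_stepSet.1 ht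
  exact mem_stepSet.2 ⟨s, hS hs, hstep s a hts⟩

theorem evalFrom_mono (hstep : ∀ s a, M.step s a ⊆ M'.step s a) (x : List α) :
    ∀ {S S' : Set σ}, S ⊆ S' → M.evalFrom S x ⊆ M'.evalFrom S' x := by
  induction x with
  | nil => exact id
  | cons a x ih => exact fun hS => ih (stepSet_mono hstep hS a)

theorem accepts_mono (hstep : ∀ s a, M.step s a ⊆ M'.step s a) (hstart : M.start ⊆ M'.start)
    (haccept : M.accept ⊆ M'.accept) : M.accepts ≤ M'.accepts := by
  intro x hx
  obtain ⟨t, ht, hx⟩ := mem_accepts.1 hx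
  exact mem_accepts.2 ⟨t, haccept ht, evalFrom_mono hstep x hstart hx⟩

end NFA

theorem restrict_step_subset {σ : Type*} (N : NFA Sig σ) (s : σ) (a : Sig) :
    (restrict N).step s a ⊆ N.step s a := by
  cases a <;> simp [restrict]

theorem accepts_restrict_le {σ : Type*} (N : NFA Sig σ) : (restrict N).accepts ≤ N.accepts :=
  NFA.accepts_mono (restrict_step_subset N) subset_rfl subset_rfl

/-- Equivalence theorem, part 2: every word accepted by the restricted automaton
is a reduced version of some word of L₀. -/
theorem stmt9 {σ : Type*} (Nm : NFA Sig σ) (L₀ : Language Sig)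
    (h : ∀ α ∈ Nm.accepts, ∃ α' ∈ L₀, Relation.ReflTransGen Red α' α) :
    ∀ β ∈ (restrict Nm).accepts, ∃ α ∈ L₀, Relation.ReflTransGen Red α β :=
  fun β hβ => h β (accepts_restrict_le Nm hβ)
end
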